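/- Let q = 2^r. Consider the F_2-linear map Φ from F_q to the space of functions DC⁻(n,q) → F_2 (respectively DC⁺(n,q) → F_2) sending a ∈ F_q to the function w ↦ tr(a·Tr w). Then: (a) Φ is injective (hence an isomorphism onto the dual code C(DC⁻(n,q))^⊥, which therefore has exactly q codewords) whenever n ≥ 3 is odd and q is arbitrary, or n = 1 and q ≥ 8; (b) the analogous map for DC⁺(n,q) is injective (hence an isomorphism onto C(DC⁺(n,q))^⊥) whenever n ≥ 4 is even and q is arbitrary, or n = 2 and q ≥ 4. -/

import Mathlib

open scoped Classical
open Finset Matrix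

noncomputable section

/-- The trace map `tr : F_q → F_2`, viewed inside `F`:
`tr(x) = x + x² + ⋯ + x^(2^(r−1))`. -/
def trF (F : Type*) [Field F] (r : ℕ) (x : F) : F :=
  ∑ i ∈ Finset.range r, x ^ (2 ^ i)

/-- The canonical additive character `λ(x) = (−1)^(tr x)`, valued in `ℚ`. -/
def lam (F : Type*) [Field F] (r : ℕ) (x : F) : ℚ :=
  if trF F r x = 0 then 1 else -1

/-- The Kloosterman sum `K(λ;a)`. -/
def Kl (F : Type*) [Field F] [Fintype F] (r : ℕ) (a : F) : ℚ :=
  ∑ α : Fˣ, lam F r ((α : F) + a * ((α : F))⁻¹)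

/-- The 2-dimensional Kloosterman sum `K₂(λ;a)`. -/
def Kl2 (F : Type*) [Field F] [Fintype F] (r : ℕ) (a : F) : ℚ :=
  ∑ α : Fˣ, ∑ β : Fˣ, lam F r ((α : F) + (β : F) + a * ((α : F))⁻¹ * ((β : F))⁻¹)

/-- The m-dimensional Kloosterman sum `K_m(λ;a)`; `K₀(λ;a) = λ(a)`. -/
def Klm (F : Type*) [Field F] [Fintype F] (r m : ℕ) (a : F) : ℚ :=
  ∑ α : Fin m → Fˣ, lam F r ((∑ i, ((α i : F))) + a * ∏ i, ((α i : F))⁻¹)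

/-- Power moments of Kloosterman sums, `MK^h`. -/
def MK (F : Type*) [Field F] [Fintype F] (r h : ℕ) : ℚ :=
  ∑ a : Fˣ, (Kl F r (a : F)) ^ h

/-- Power moments of 2-dimensional Kloosterman sums, `MK₂^h`. -/
def MK2 (F : Type*) [Field F] [Fintype F] (r h : ℕ) : ℚ :=
  ∑ a : Fˣ, (Kl2 F r (a : F)) ^ h

/-- Stirling numbers of the second kind. -/
def stirl (h t : ℕ) : ℚ :=
  (1 / (t.factorial : ℚ)) *
    ∑ j ∈ Finset.range (t + 1), (-1 : ℚ) ^ (t - j) * (t.choose j : ℚ) * (j : ℚ) ^ h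

/-- Binomial coefficient `binom(b,a)` with the convention that it is `0`
when `a < 0` or `a > b`. -/
def binomQ (b a : ℤ) : ℚ :=
  if 0 ≤ a ∧ a ≤ b then (b.toNat.choose a.toNat : ℚ) else 0

/-- The q-binomial coefficient `[n,r]_q`. -/
def qbinom (q n r : ℕ) : ℚ :=
  ∏ j ∈ Finset.range r, ((q : ℚ) ^ (n - j) - 1) / ((q : ℚ) ^ (r - j) - 1)

/-- `A⁻(n,q)`. -/
def Aneg (q n : ℕ) : ℚ :=
  (q : ℚ) ^ ((5 * n ^ 2 - 1) / 4) * qbinom q n 1 *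
    ∏ j ∈ Finset.range ((n - 1) / 2), ((q : ℚ) ^ (2 * (j + 1) - 1) - 1)

/-- `B⁻(n,q)`. -/
def Bneg (q n : ℕ) : ℚ :=
  (q : ℚ) ^ ((n - 1) ^ 2 / 4) * ((q : ℚ) ^ n - 1) *
    ∏ j ∈ Finset.range ((n - 1) / 2), ((q : ℚ) ^ (2 * (j + 1)) - 1)

/-- `A⁺(n,q)`. -/
def Apos (q n : ℕ) : ℚ :=
  (q : ℚ) ^ ((5 * n ^ 2 - 2 * n) / 4) * qbinom q n 2 *
    ∏ j ∈ Finset.range ((n - 2) / 2), ((q : ℚ) ^ (2 * (j + 1) - 1) - 1)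

/-- `B⁺(n,q)`. -/
def Bpos (q n : ℕ) : ℚ :=
  (q : ℚ) ^ ((n - 2) ^ 2 / 4) * ((q : ℚ) ^ n - 1) * ((q : ℚ) ^ (n - 1) - 1) *
    ∏ j ∈ Finset.range ((n - 2) / 2), ((q : ℚ) ^ (2 * (j + 1)) - 1)

/-- The type of `2n × 2n` matrices over `F`. -/
abbrev Mat (F : Type*) (n : ℕ) := Matrix (Fin n ⊕ Fin n) (Fin n ⊕ Fin n) F

/-- The maximal parabolic subgroup `P(2n,q)` of `Sp(2n,q)`, as a set of matrices. -/
def Pmat (F : Type*) [Field F] (n : ℕ) : Set (Mat F n) :=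
  {w | ∃ A B : Matrix (Fin n) (Fin n) F, IsUnit A ∧ Bᵀ = B ∧
        w = Matrix.fromBlocks A 0 0 (A⁻¹)ᵀ * Matrix.fromBlocks 1 B 0 1}

/-- The element `σ_r ∈ Sp(2n,q)`. -/
def sigmaMat (F : Type*) [Field F] (n r : ℕ) : Mat F n :=
  Matrix.fromBlocks
    (Matrix.of fun i j : Fin n => if i = j ∧ r ≤ (i : ℕ) then 1 else 0)
    (Matrix.of fun i j : Fin n => if i = j ∧ (i : ℕ) < r then 1 else 0)
    (Matrix.of fun i j : Fin n => if i = j ∧ (i : ℕ) < r then 1 else 0)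
    (Matrix.of fun i j : Fin n => if i = j ∧ r ≤ (i : ℕ) then 1 else 0)

/-- The double coset `P σ_r P` in `Sp(2n,q)`. -/
def DCoset (F : Type*) [Field F] (n r : ℕ) : Set (Mat F n) :=
  {w | ∃ p ∈ Pmat F n, ∃ p' ∈ Pmat F n, w = p * sigmaMat F n r * p'}

/-- `DC⁻(n,q) = P σ_(n−1) P`. -/
def DCneg (F : Type*) [Field F] (n : ℕ) : Set (Mat F n) := DCoset F n (n - 1)

/-- `DC⁺(n,q) = P σ_(n−2) P`. -/
def DCpos (F : Type*) [Field F] (n : ℕ) : Set (Mat F n) := DCoset F n (n - 2)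

/-- `N_S(β) = |{w ∈ S : Tr w = β}|`. -/
def NDC (F : Type*) [Field F] [Fintype F] (n : ℕ) (S : Set (Mat F n)) (β : F) : ℕ :=
  (Finset.univ.filter fun w => w ∈ S ∧ Matrix.trace w = β).card

/-- Hamming weight of a binary word. -/
def wordWeight {α : Type*} [Fintype α] (u : α → ZMod 2) : ℕ :=
  (Finset.univ.filter fun x => u x = 1).card

/-- The number of codewords of Hamming weight `j` in the binary code `C(S)`
consisting of all `u ∈ F_2^S` with `∑_{w ∈ S} u(w)·Tr(w) = 0` in `F`. -/
def weightCount (F : Type*) [Field F] [Fintype F] (n : ℕ) (S : Set (Mat F n)) (j : ℕ) : ℕ :=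
  Nat.card {u : S → ZMod 2 //
    (∑ w : S, if u w = 1 then Matrix.trace (w : Mat F n) else 0) = 0 ∧ wordWeight u = j}

/-- The Kloosterman sum `K(ψ;a)` for a general (complex-valued) additive character. -/
def KlC (F : Type*) [Field F] [Fintype F] (ψ : AddChar F ℂ) (a : F) : ℂ :=
  ∑ α : Fˣ, ψ ((α : F) + a * ((α : F))⁻¹)

/-- The Kloosterman sum `K_{GL(t,q)}(ψ;a)` for the general linear group. -/
def KGL (F : Type*) [Field F] [Fintype F] (ψ : AddChar F ℂ) (t : ℕ) (a : F) : ℂ :=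
  ∑ w : Matrix.GeneralLinearGroup (Fin t) F,
    ψ (Matrix.trace (w : Matrix (Fin t) (Fin t) F) +
       a * Matrix.trace ((↑(w⁻¹) : Matrix (Fin t) (Fin t) F)))

/-- The exponential sum `∑_{w ∈ S} ψ(Tr w)` over a set of matrices. -/
def expSum (F : Type*) [Field F] [Fintype F] (n : ℕ) (S : Set (Mat F n))
    (ψ : AddChar F ℂ) : ℂ :=
  ∑ w ∈ Finset.univ.filter (fun w => w ∈ S), ψ (Matrix.trace w)

/-- The exponential sum `∑_{w ∈ S} λ(a·Tr w)` over a set of matrices. -/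
def expSumQ (F : Type*) [Field F] [Fintype F] (r n : ℕ) (S : Set (Mat F n)) (a : F) : ℚ :=
  ∑ w ∈ Finset.univ.filter (fun w => w ∈ S), lam F r (a * Matrix.trace w)

/-- `tr` as a map to `ZMod 2`. -/
def trZ (F : Type*) [Field F] (r : ℕ) (x : F) : ZMod 2 :=
  if trF F r x = 0 then 0 else 1

/-!
`trZ` is the absolute trace `F → 𝔽₂`, so `a ↦ (w ↦ tr(a · Tr w))` is injective as soon as, for
every `c ≠ 0`, some `w` in the double coset has `tr(c · Tr w) ≠ 0`. For `P σ_k P` with `0 < k`,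
and for `P` itself when `n = 2` and `q ≥ 4`, the matrix trace already takes every value in `F`.
For `n = 1` the traces on `P` are the `a + a⁻¹`; if `tr(c(a + a⁻¹))` vanished for all `a ≠ 0`,
then `tr(c/x) = tr(cx)` together with `1/u + 1/(u + w) = w/(u(u + w))` would make the additive map
`u ↦ tr(c(u²/w + u))` constant and non-zero outside `{0, w}`; once `q > 4` there are `u₁, u₂`
with `u₁`, `u₂`, `u₁ + u₂` all outside `{0, w}`, and additivity gives a contradiction.
-/

section FiniteFieldTrace

variable {F : Type*} [Field F] [Fintype F] {r : ℕ}

theorem charP_two_of_card_eq_two_pow (hF : Fintype.card F = 2 ^ r) : CharP F 2 := by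
  refine CharTwo.of_one_ne_zero_of_two_eq_zero one_ne_zero (eq_zero_of_pow_eq_zero (n := r) ?_)
  exact_mod_cast hF ▸ FiniteField.cast_card_eq_zero F

variable [Algebra (ZMod 2) F]

theorem finrank_zmod_two_eq (hF : Fintype.card F = 2 ^ r) : Module.finrank (ZMod 2) F = r := by
  rw [Module.card_eq_pow_finrank (K := ZMod 2), ZMod.card] at hF
  exact Nat.pow_right_injective le_rfl hF

theorem trF_eq_algebraMap_trace (hF : Fintype.card F = 2 ^ r) (x : F) :
    trF F r x = algebraMap (ZMod 2) F (Algebra.trace (ZMod 2) F x) := by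
  rw [FiniteField.algebraMap_trace_eq_sum_pow, finrank_zmod_two_eq hF, Nat.card_zmod, trF]

theorem trZ_eq_trace (hF : Fintype.card F = 2 ^ r) (x : F) :
    trZ F r x = Algebra.trace (ZMod 2) F x := by
  rw [trZ, trF_eq_algebraMap_trace hF, map_eq_zero_iff _ (algebraMap (ZMod 2) F).injective]
  obtain h | h := (by decide : ∀ t : ZMod 2, t = 0 ∨ t = 1) (Algebra.trace (ZMod 2) F x) <;>
    simp [h]

end FiniteFieldTrace

section TraceCode

variable {K L : Type*} [Field K] [Field L] [Algebra K L] {X : Type*} {S : Set X}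

theorem injective_trace_mul_of_forall_ne_zero (t : X → L)
    (h : ∀ c ≠ 0, ∃ w ∈ S, Algebra.trace K L (c * t w) ≠ 0) :
    Function.Injective fun (a : L) (w : S) => Algebra.trace K L (a * t w) := by
  intro a b hab
  by_contra hne
  obtain ⟨w, hw, hc⟩ := h (a - b) (sub_ne_zero.mpr hne)
  apply hc
  rw [sub_mul, map_sub, sub_eq_zero]
  exact congrFun hab ⟨w, hw⟩

theorem Algebra.exists_trace_mul_ne_zero (K : Type*) {L : Type*} [Field K] [Field L] [Algebra K L]
    [FiniteDimensional K L] [Algebra.IsSeparable K L] {c : L} (hc : c ≠ 0) :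
    ∃ x, Algebra.trace K L (c * x) ≠ 0 := by
  obtain ⟨x, hx⟩ : ∃ x, Algebra.trace K L x ≠ 0 := by
    by_contra! h0
    exact Algebra.trace_ne_zero K L (LinearMap.ext h0)
  exact ⟨c⁻¹ * x, by rwa [mul_inv_cancel_left₀ hc]⟩

theorem injective_trace_mul_of_forall_exists_eq [FiniteDimensional K L] [Algebra.IsSeparable K L]
    (t : X → L) (h : ∀ β, ∃ w ∈ S, t w = β) :
    Function.Injective fun (a : L) (w : S) => Algebra.trace K L (a * t w) := by
  refine injective_trace_mul_of_forall_ne_zero t fun c hc => ?_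
  obtain ⟨x, hx⟩ := Algebra.exists_trace_mul_ne_zero K hc
  obtain ⟨w, hw, rfl⟩ := h x
  exact ⟨w, hw, hx⟩

end TraceCode

theorem Matrix.trace_fromBlocks {m n R : Type*} [Fintype m] [Fintype n] [AddCommMonoid R]
    (A : Matrix m m R) (B : Matrix m n R) (C : Matrix n m R) (D : Matrix n n R) :
    (fromBlocks A B C D).trace = A.trace + D.trace := by
  simp [Matrix.trace, Fintype.sum_sum_type]

section DoubleCoset

variable {F : Type*} [Field F] {n : ℕ}

theorem one_mem_Pmat : (1 : Mat F n) ∈ Pmat F n :=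
  ⟨1, 0, isUnit_one, transpose_zero, by simp [fromBlocks_one]⟩

theorem sigmaMat_zero : sigmaMat F n 0 = 1 := by
  rw [← fromBlocks_one]
  ext (i | i) (j | j) <;> simp [sigmaMat, one_apply]

theorem Pmat_subset_DCoset_zero : Pmat F n ⊆ DCoset F n 0 :=
  fun p hp => ⟨p, hp, 1, one_mem_Pmat, by rw [sigmaMat_zero, mul_one, mul_one]⟩

theorem exists_mem_DCoset_zero_trace_eq (A : Matrix (Fin n) (Fin n) F) (hA : IsUnit A) :
    ∃ w ∈ DCoset F n 0, w.trace = A.trace + A⁻¹.trace := by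
  refine ⟨fromBlocks A 0 0 A⁻¹ᵀ * fromBlocks 1 0 0 1,
    Pmat_subset_DCoset_zero ⟨A, 0, hA, transpose_zero, rfl⟩, ?_⟩
  rw [fromBlocks_one, mul_one, trace_fromBlocks, trace_transpose]

theorem exists_mem_DCoset_trace_eq [CharP F 2] {k : ℕ} (hn : 0 < n) (hk : 0 < k) (β : F) :
    ∃ w ∈ DCoset F n k, w.trace = β := by
  let i₀ : Fin n := ⟨0, hn⟩
  let p : Mat F n := fromBlocks 1 (single i₀ i₀ β) 0 1
  have hp : p ∈ Pmat F n :=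
    ⟨1, single i₀ i₀ β, isUnit_one, transpose_single _ _ _, by simp [p]⟩
  refine ⟨p * sigmaMat F n k * 1, ⟨p, hp, 1, one_mem_Pmat, rfl⟩, ?_⟩
  rw [mul_one, sigmaMat, fromBlocks_multiply, trace_fromBlocks, one_mul, zero_mul,
    zero_add, trace_add, trace_single_mul, add_right_comm, CharTwo.add_self_eq_zero, zero_add]
  simp [i₀, hk]

theorem exists_mem_DCoset_one_zero_trace_eq {a : F} (ha : a ≠ 0) :
    ∃ w ∈ DCoset F 1 0, w.trace = a + a⁻¹ := by
  have hA : IsUnit (diagonal fun _ : Fin 1 => a) := by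
    simpa [isUnit_diagonal, Pi.isUnit_iff] using ha
  simpa [inv_diagonal] using exists_mem_DCoset_zero_trace_eq _ hA

theorem exists_mem_DCoset_two_zero_trace_eq [Fintype F] [CharP F 2]
    (hF : 2 < Fintype.card F) (β : F) : ∃ w ∈ DCoset F 2 0, w.trace = β := by
  obtain ⟨d, -, hd⟩ := exists_mem_notMem_of_card_lt_card (s := ({0, 1} : Finset F)) (t := univ)
    (by rw [card_univ]; exact (card_le_two).trans_lt hF)
  rw [mem_insert, mem_singleton, not_or] at hd
  have hd' : 1 + d⁻¹ ≠ 0 := by rw [Ne, CharTwo.add_eq_zero, eq_comm, inv_eq_one]; exact hd.2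
  -- `A = !![0, d; 1, t]` has `Tr A + Tr A⁻¹ = t (1 + d⁻¹)`, and `d ∉ {0, 1}` makes this onto.
  have hA : IsUnit !![0, d; 1, β / (1 + d⁻¹)] := by
    rw [isUnit_iff_isUnit_det, det_fin_two_of]; simpa using hd.1
  obtain ⟨w, hw, htr⟩ := exists_mem_DCoset_zero_trace_eq _ hA
  refine ⟨w, hw, ?_⟩
  rw [htr, Matrix.inv_def, det_fin_two_of, adjugate_fin_two_of, trace_smul, trace_fin_two_of,
    trace_fin_two_of, Ring.inverse_eq_inv', zero_mul, zero_sub, mul_one, CharTwo.neg_eq,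
    smul_eq_mul, zero_add, add_zero, ← one_add_mul, mul_div_cancel₀ _ hd']

end DoubleCoset

theorem AddMonoidHom.exists_ne_zero_map_inv_ne {F M : Type*} [Field F] [Fintype F] [CharP F 2]
    [AddCommGroup M] (L : F →+ M) (hL : L ≠ 0) (hF : 4 < Fintype.card F) :
    ∃ a ≠ 0, L a⁻¹ ≠ L a := by
  by_contra! h
  obtain ⟨w, hw⟩ : ∃ w, L w ≠ 0 := by
    by_contra! h0
    exact hL (AddMonoidHom.ext h0)
  have hw0 : w ≠ 0 := by
    rintro rfl
    exact hw (map_zero L)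
  have harmonic : ∀ u v : F, u ≠ 0 → v ≠ 0 → u ≠ v → L (u * v / (u + v)) = L u + L v := by
    intro u v hu hv huv
    have huv' : u + v ≠ 0 := by rwa [Ne, CharTwo.add_eq_zero]
    rw [← h _ (div_ne_zero (mul_ne_zero hu hv) huv'), ← h u hu, ← h v hv, ← map_add, inv_div]
    congr 1
    field_simp
    ring
  have hconst : ∀ u, u ≠ 0 → u ≠ w → L (u ^ 2 / w + u) = L w := by
    intro u hu huw
    have huw' : u + w ≠ 0 := by rwa [Ne, CharTwo.add_eq_zero]
    have hne : u ≠ u + w := by rwa [Ne, left_eq_add]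
    calc L (u ^ 2 / w + u) = L (u * (u + w) / (u + (u + w))) := by
          rw [CharTwo.add_cancel_left]
          congr 1
          field_simp
      _ = L u + L (u + w) := harmonic u (u + w) hu huw' hne
      _ = L w := by rw [← map_add, CharTwo.add_cancel_left]
  obtain ⟨u₁, -, hu₁⟩ := exists_mem_notMem_of_card_lt_card (s := ({0, w} : Finset F)) (t := univ)
    (by rw [card_univ]; exact (card_le_two).trans_lt (by omega))
  obtain ⟨u₂, -, hu₂⟩ := exists_mem_notMem_of_card_lt_card
    (s := ({0, w, u₁, w + u₁} : Finset F)) (t := univ)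
    (by rw [card_univ]; exact (card_le_four).trans_lt hF)
  simp only [mem_insert, mem_singleton, not_or] at hu₁ hu₂
  have h₁₂ : u₁ + u₂ ≠ 0 := by rw [Ne, CharTwo.add_eq_zero]; exact Ne.symm hu₂.2.2.1
  have h₁₂' : u₁ + u₂ ≠ w := by rw [add_comm, Ne, CharTwo.add_eq_iff_eq_add]; exact hu₂.2.2.2
  have : L w + L w = L w := calc
    L w + L w = L (u₁ ^ 2 / w + u₁) + L (u₂ ^ 2 / w + u₂) := by
        rw [hconst u₁ hu₁.1 hu₁.2, hconst u₂ hu₂.1 hu₂.2.1]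
    _ = L ((u₁ + u₂) ^ 2 / w + (u₁ + u₂)) := by
        rw [← map_add, CharTwo.add_sq]
        congr 1
        ring
    _ = L w := hconst _ h₁₂ h₁₂'
  exact hw (by simpa using this)

theorem exists_trace_mul_add_inv_ne_zero {F : Type*} [Field F] [Fintype F] [Algebra (ZMod 2) F]
    (hF : 4 < Fintype.card F) {c : F} (hc : c ≠ 0) :
    ∃ a ≠ 0, Algebra.trace (ZMod 2) F (c * (a + a⁻¹)) ≠ 0 := by
  have : CharP F 2 := charP_of_injective_algebraMap' (ZMod 2) 2
  let L : F →+ ZMod 2 := (Algebra.trace (ZMod 2) F).toAddMonoidHom.comp (AddMonoidHom.mulLeft c)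
  have hL : L ≠ 0 := by
    obtain ⟨x, hx⟩ := Algebra.exists_trace_mul_ne_zero (ZMod 2) hc
    exact fun h0 => hx (DFunLike.congr_fun h0 x)
  obtain ⟨a, ha, hne⟩ := L.exists_ne_zero_map_inv_ne hL hF
  refine ⟨a, ha, ?_⟩
  rw [mul_add, map_add, Ne, CharTwo.add_eq_zero]
  exact hne.symm

theorem dual_code_injective_general
    (F : Type*) [Field F] [Fintype F] (r q : ℕ) (hq : q = 2 ^ r)
    (hF : Fintype.card F = q) (n : ℕ) :
    ((Odd n ∧ 3 ≤ n) ∨ (n = 1 ∧ 8 ≤ q) →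
      Function.Injective
        (fun a : F => fun w : DCneg F n => trZ F r (a * Matrix.trace (w : Mat F n)))) ∧
    ((Even n ∧ 4 ≤ n) ∨ (n = 2 ∧ 4 ≤ q) →
      Function.Injective
        (fun a : F => fun w : DCpos F n => trZ F r (a * Matrix.trace (w : Mat F n)))) := by
  subst hq
  have : CharP F 2 := charP_two_of_card_eq_two_pow hF
  let := ZMod.algebra F 2
  simp only [trZ_eq_trace hF]
  refine ⟨?_, ?_⟩
  · rintro (⟨-, hn⟩ | ⟨rfl, hq⟩)
    · exact injective_trace_mul_of_forall_exists_eq _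
        (exists_mem_DCoset_trace_eq (by omega) (by omega))
    · refine injective_trace_mul_of_forall_ne_zero _ fun c hc => ?_
      obtain ⟨a, ha, htr⟩ := exists_trace_mul_add_inv_ne_zero (by omega) hc
      obtain ⟨w, hw, htw⟩ := exists_mem_DCoset_one_zero_trace_eq ha
      exact ⟨w, hw, by rwa [htw]⟩
  · rintro (⟨-, hn⟩ | ⟨rfl, hq⟩)
    · exact injective_trace_mul_of_forall_exists_eq _
        (exists_mem_DCoset_trace_eq (by omega) (by omega))
    · exact injective_trace_mul_of_forall_exists_eq _
        (exists_mem_DCoset_two_zero_trace_eq (by omega))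

/-- Theorem 12: the `F_2`-linear map `a ↦ (w ↦ tr(a·Tr w))` from
`F_q` onto the dual code `C(DC^∓(n,q))^⊥` is injective in the stated ranges. -/
theorem dual_code_injective
    (F : Type*) [Field F] [Fintype F] (r q : ℕ) (hr : 0 < r) (hq : q = 2 ^ r)
    (hF : Fintype.card F = q) (n : ℕ) :
    ((Odd n ∧ 3 ≤ n) ∨ (n = 1 ∧ 8 ≤ q) →
      Function.Injective
        (fun a : F => fun w : DCneg F n => trZ F r (a * Matrix.trace (w : Mat F n)))) ∧
    ((Even n ∧ 4 ≤ n) ∨ (n = 2 ∧ 4 ≤ q) →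
      Function.Injective
        (fun a : F => fun w : DCpos F n => trZ F r (a * Matrix.trace (w : Mat F n)))) :=
  dual_code_injective_general F r q hq hF n
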